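/- Base case of the splitting lemma: if n is a multiple of 2^x and X = {π_1,...,π_x} is a set of x permutations of [n], then there exist disjoint sets A_1, A_2 ⊆ [n], each of size n/2^x, such that for every π_i ∈ X, either all elements of A_1 precede all elements of A_2 in π_i or vice versa. -/

import Mathlib

/-!
Induct on the number of permutations, keeping two sets of size `m` that every permutation so far
separates (puts one wholly before the other). To add a permutation `π`, take such a pair of size
`2m` and cut each `Aᵢ` into its `π`-earlier half `Tᵢ` and `π`-later half `Uᵢ`. Either `T₁ ⇒ U₂`
in `π`, or some `b ∈ U₂` precedes some `a ∈ T₁` and then `T₂ ⇒ b ⇒ a ⇒ U₁`. Either new pair sits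
inside the old one, so the earlier permutations still separate it. Starting from `m = ⌊n / 2^x⌋`
works since `2^x m ≤ n`, and a pair separated by even one permutation is disjoint.
-/

/-- `A ⇒ B` in `π`: every element of `A` appears before every element of `B`
in the permutation `π`. -/
def Before {n : ℕ} (π : Equiv.Perm (Fin n)) (A B : Finset (Fin n)) : Prop :=
  ∀ a ∈ A, ∀ b ∈ B, π a < π b

def Separated {n : ℕ} (π : Equiv.Perm (Fin n)) (A B : Finset (Fin n)) : Prop :=
  Before π A B ∨ Before π B A

section

variable {n : ℕ} {π : Equiv.Perm (Fin n)} {A B A' B' : Finset (Fin n)}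

theorem Before.mono (h : Before π A B) (hA : A' ⊆ A) (hB : B' ⊆ B) : Before π A' B' :=
  fun a ha b hb => h a (hA ha) b (hB hb)

theorem Before.disjoint (h : Before π A B) : Disjoint A B :=
  Finset.disjoint_left.mpr fun a ha hb => (h a ha a hb).false

theorem Separated.mono (h : Separated π A B) (hA : A' ⊆ A) (hB : B' ⊆ B) : Separated π A' B' :=
  h.imp (·.mono hA hB) (·.mono hB hA)

theorem Separated.disjoint (h : Separated π A B) : Disjoint A B :=
  h.elim Before.disjoint fun h => h.disjoint.symm

end

theorem exists_subset_card_eq_before {n : ℕ} (π : Equiv.Perm (Fin n)) (S : Finset (Fin n))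
    {k : ℕ} (hk : k ≤ S.card) : ∃ T ⊆ S, T.card = k ∧ Before π T (S \ T) := by
  induction k with
  | zero => exact ⟨∅, by simp [Before]⟩
  | succ k ih =>
    obtain ⟨T, hTS, hcard, hbefore⟩ := ih (Nat.le_of_succ_le hk)
    have hne : (S \ T).Nonempty := by
      rw [← Finset.card_pos, Finset.card_sdiff_of_subset hTS]; omega
    obtain ⟨c, hc, hcmin⟩ := Finset.exists_min_image (S \ T) (fun a => π a) hne
    obtain ⟨hcS, hcT⟩ := Finset.mem_sdiff.mp hc
    refine ⟨insert c T, Finset.insert_subset hcS hTS,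
      by rw [Finset.card_insert_of_notMem hcT, hcard], ?_⟩
    intro a ha b hb
    obtain ⟨hbS, hbcT⟩ := Finset.mem_sdiff.mp hb
    have hbrest : b ∈ S \ T :=
      Finset.mem_sdiff.mpr ⟨hbS, fun h => hbcT (Finset.mem_insert_of_mem h)⟩
    rcases Finset.mem_insert.mp ha with rfl | haT
    · refine (hcmin b hbrest).lt_of_ne fun h => hbcT ?_
      rw [π.injective h]
      exact Finset.mem_insert_self _ _
    · exact hbefore a haT b hbrest

theorem exists_subset_subset_separated {n m : ℕ} (π : Equiv.Perm (Fin n))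
    {A₁ A₂ : Finset (Fin n)} (h₁ : A₁.card = 2 * m) (h₂ : A₂.card = 2 * m) :
    ∃ B₁ ⊆ A₁, ∃ B₂ ⊆ A₂, B₁.card = m ∧ B₂.card = m ∧ Separated π B₁ B₂ := by
  obtain ⟨T₁, hT₁, hT₁card, hbefore₁⟩ := exists_subset_card_eq_before π A₁ (k := m) (by omega)
  obtain ⟨T₂, hT₂, hT₂card, hbefore₂⟩ := exists_subset_card_eq_before π A₂ (k := m) (by omega)
  have hU₁card : (A₁ \ T₁).card = m := by rw [Finset.card_sdiff_of_subset hT₁]; omega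
  have hU₂card : (A₂ \ T₂).card = m := by rw [Finset.card_sdiff_of_subset hT₂]; omega
  by_cases h : Before π T₁ (A₂ \ T₂)
  · exact ⟨T₁, hT₁, A₂ \ T₂, Finset.sdiff_subset, hT₁card, hU₂card, .inl h⟩
  · obtain ⟨a, ha, b, hb, hba⟩ : ∃ a ∈ T₁, ∃ b ∈ A₂ \ T₂, π b ≤ π a := by
      unfold Before at h; push Not at h; exact h
    refine ⟨A₁ \ T₁, Finset.sdiff_subset, T₂, hT₂, hU₁card, hT₂card, .inr ?_⟩
    intro a' ha' b' hb'
    calc π a' < π b := hbefore₂ a' ha' b hb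
      _ ≤ π a := hba
      _ < π b' := hbefore₁ a ha b' hb'

theorem exists_card_eq_separated {n : ℕ} :
    ∀ {k : ℕ} (X : Fin k → Equiv.Perm (Fin n)) {m : ℕ}, 2 ^ k * m ≤ n →
      ∃ A₁ A₂ : Finset (Fin n), A₁.card = m ∧ A₂.card = m ∧ ∀ i, Separated (X i) A₁ A₂
  | 0, _, m, hm => by
    obtain ⟨A, -, hA⟩ :=
      Finset.exists_subset_card_eq (s := (Finset.univ : Finset (Fin n))) (n := m) (by simpa using hm)
    exact ⟨A, A, hA, hA, fun i => i.elim0⟩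
  | k + 1, X, m, hm => by
    obtain ⟨A₁, A₂, h₁, h₂, hsep⟩ :=
      exists_card_eq_separated (fun i => X i.castSucc) (m := 2 * m)
        (by rw [← mul_assoc, ← pow_succ]; exact hm)
    obtain ⟨B₁, hB₁, B₂, hB₂, hB₁card, hB₂card, hlast⟩ :=
      exists_subset_subset_separated (X (Fin.last k)) h₁ h₂
    exact ⟨B₁, B₂, hB₁card, hB₂card, Fin.lastCases hlast fun i => (hsep i).mono hB₁ hB₂⟩

theorem stmt15_general (x n : ℕ) (hx : 1 ≤ x)
    (X : Fin x → Equiv.Perm (Fin n)) :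
    ∃ A₁ A₂ : Finset (Fin n),
      Disjoint A₁ A₂ ∧ A₁.card = n / 2 ^ x ∧ A₂.card = n / 2 ^ x ∧
      ∀ i : Fin x, Before (X i) A₁ A₂ ∨ Before (X i) A₂ A₁ := by
  obtain ⟨A₁, A₂, h₁, h₂, hsep⟩ := exists_card_eq_separated X (Nat.mul_div_le n (2 ^ x))
  exact ⟨A₁, A₂, (hsep ⟨0, hx⟩).disjoint, h₁, h₂, hsep⟩

theorem stmt15 (x n : ℕ) (hx : 1 ≤ x) (hn : 2 ^ x ∣ n)
    (X : Fin x → Equiv.Perm (Fin n)) :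
    ∃ A₁ A₂ : Finset (Fin n),
      Disjoint A₁ A₂ ∧ A₁.card = n / 2 ^ x ∧ A₂.card = n / 2 ^ x ∧
      ∀ i : Fin x, Before (X i) A₁ A₂ ∨ Before (X i) A₂ A₁ :=
  stmt15_general x n hx X
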